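/- (Commutative Spitzer identity) Let (A,R) be a unital commutative Rota-Baxter ℚ-algebra of weight 1. Then for a ∈ A, in the power series ring A[[x]]: exp(R(log((1-ax)^{-1}))) = ∑_{n≥0} xⁿ (Ra)^{[n]}, where (Ra)^{[0]} = 1 and (Ra)^{[n+1]} = R((Ra)^{[n]} a), and R is extended coefficientwise to A[[x]]. -/

import Mathlib

open PowerSeries Finset

namespace SpitzerAux

variable {A : Type*} [CommRing A] [Algebra ℚ A]

/-- Coefficientwise extension of `R` to power series. -/
noncomputable def Rb (R : A →ₗ[ℚ] A) (f : A⟦X⟧) : A⟦X⟧ :=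
  PowerSeries.mk fun n => R (coeff n f)

@[simp] lemma coeff_Rb (R : A →ₗ[ℚ] A) (f : A⟦X⟧) (n : ℕ) :
    coeff n (Rb R f) = R (coeff n f) := coeff_mk _ _

omit [Algebra ℚ A] in
lemma coeff_dF (f : A⟦X⟧) (n : ℕ) :
    coeff n f.derivativeFun = coeff (n + 1) f * (n + 1) := coeff_derivative f n

omit [Algebra ℚ A] in
lemma dF_C (r : A) : (C r).derivativeFun = 0 := derivative_C

lemma Rb_add (R : A →ₗ[ℚ] A) (f g : A⟦X⟧) : Rb R (f + g) = Rb R f + Rb R g := by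
  ext n; simp

lemma Rb_sub (R : A →ₗ[ℚ] A) (f g : A⟦X⟧) : Rb R (f - g) = Rb R f - Rb R g := by
  ext n; simp

/-- The Rota–Baxter identity extends coefficientwise to `A⟦X⟧`. -/
lemma Rb_RB {R : A →ₗ[ℚ] A}
    (hRB : ∀ u v : A, R u * R v + R (u * v) = R (R u * v + u * R v)) (u v : A⟦X⟧) :
    Rb R u * Rb R v + Rb R (u * v) = Rb R (Rb R u * v + u * Rb R v) := by
  ext n
  simp only [map_add, coeff_Rb, coeff_mul, map_sum, ← Finset.sum_add_distrib]
  refine Finset.sum_congr rfl fun p _ => ?_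
  rw [← map_add]
  exact hRB _ _

lemma fix_zero {R : A →ₗ[ℚ] A} (c D : A⟦X⟧) (h : D = Rb R (X * c * D)) : D = 0 := by
  suffices h0 : ∀ n, coeff n D = 0 by
    ext n; simpa using h0 n
  intro n
  induction n using Nat.strong_induction_on with
  | _ n ih =>
    have hn := congrArg (coeff n) h
    rw [coeff_Rb] at hn
    cases n with
    | zero =>
      simpa [coeff_zero_eq_constantCoeff, map_mul] using hn
    | succ m =>
      rw [mul_assoc, coeff_succ_X_mul, coeff_mul] at hn
      rw [hn, Finset.sum_eq_zero, map_zero]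
      intro p hp
      have h2 : p.2 < m + 1 := by
        have := Finset.HasAntidiagonal.mem_antidiagonal.mp hp; omega
      rw [ih p.2 h2, mul_zero]

lemma fix_unique {R : A →ₗ[ℚ] A} (b c H₁ H₂ : A⟦X⟧)
    (h₁ : H₁ = Rb R (b + X * c * H₁)) (h₂ : H₂ = Rb R (b + X * c * H₂)) : H₁ = H₂ := by
  have key : H₁ - H₂ = Rb R (X * c * (H₁ - H₂)) := by
    calc H₁ - H₂ = Rb R (b + X * c * H₁) - Rb R (b + X * c * H₂) := by rw [← h₁, ← h₂]
    _ = Rb R ((b + X * c * H₁) - (b + X * c * H₂)) := (Rb_sub _ _ _).symm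
    _ = Rb R (X * c * (H₁ - H₂)) := by ring_nf
  exact sub_eq_zero.mp (fix_zero c _ key)

/-- Uniqueness for the linear ODE `Y' = G·Y` in `A⟦X⟧` over a `ℚ`-algebra. -/
lemma ode_unique (G Y Z : A⟦X⟧) (hY : Y.derivativeFun = G * Y)
    (hZ : Z.derivativeFun = G * Z) (h0 : coeff 0 Y = coeff 0 Z) : Y = Z := by
  suffices h : ∀ n, coeff n Y = coeff n Z by ext n; exact h n
  intro n
  induction n using Nat.strong_induction_on with
  | _ n ih =>
    cases n with
    | zero => exact h0
    | succ m =>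
      have e3 : coeff m (G * (Y - Z)) = 0 := by
        rw [coeff_mul]
        refine Finset.sum_eq_zero fun p hp => ?_
        have h2 : p.2 < m + 1 := by
          have := Finset.HasAntidiagonal.mem_antidiagonal.mp hp; omega
        rw [map_sub, ih p.2 h2, sub_self, mul_zero]
      have e4 : coeff (m+1) Y * ((m:A)+1) - coeff (m+1) Z * ((m:A)+1) = 0 := by
        have hy := coeff_dF Y m
        have hz := coeff_dF Z m
        rw [hY] at hy; rw [hZ] at hz
        have : coeff m (G * Y) - coeff m (G * Z) = 0 := by
          rw [← e3, mul_sub, map_sub]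
        rw [← hy, ← hz, this]
      set x := coeff (m+1) Y - coeff (m+1) Z with hx
      have e5 : ((m:ℚ)+1) • x = 0 := by
        have : ((m:ℚ)+1) • x = x * ((m:A)+1) := by
          rw [Algebra.smul_def, mul_comm]
          norm_num
        rw [this, hx, sub_mul, e4]
      have hne : (m:ℚ)+1 ≠ 0 := by positivity
      have e6 : x = 0 := by
        calc x = (((m:ℚ)+1)⁻¹ * ((m:ℚ)+1)) • x := by rw [inv_mul_cancel₀ hne, one_smul]
        _ = ((m:ℚ)+1)⁻¹ • (((m:ℚ)+1) • x) := by rw [mul_smul]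
        _ = 0 := by rw [e5, smul_zero]
      exact sub_eq_zero.mp (hx ▸ e6)

noncomputable def gg (a : A) : A⟦X⟧ := PowerSeries.mk fun n => a ^ (n+1)

noncomputable def FF (R : A →ₗ[ℚ] A) (a : A) : A⟦X⟧ :=
  PowerSeries.mk fun n => Nat.rec (motive := fun _ => A) 1 (fun _ p => R (p * a)) n

noncomputable def LL (R : A →ₗ[ℚ] A) (a : A) : A⟦X⟧ :=
  PowerSeries.mk fun m => R ((m : ℚ)⁻¹ • a ^ m)

noncomputable def ee (R : A →ₗ[ℚ] A) (a : A) (N : ℕ) : A⟦X⟧ :=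
  ∑ k ∈ range (N+1), (k.factorial : ℚ)⁻¹ • (LL R a) ^ k

noncomputable def EE (R : A →ₗ[ℚ] A) (a : A) : A⟦X⟧ :=
  PowerSeries.mk fun n : ℕ =>
    ∑ k ∈ Finset.range (n + 1), (k.factorial : ℚ)⁻¹ • coeff n ((LL R a) ^ k)

omit [Algebra ℚ A] in
lemma hg (a : A) : gg a - (X * C a) * gg a = C a := by
  ext n
  cases n with
  | zero => simp [gg, coeff_zero_eq_constantCoeff, map_mul, map_sub]
  | succ m =>
    rw [map_sub, mul_assoc, coeff_succ_X_mul, coeff_C_mul]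
    simp [gg, coeff_C, pow_succ, mul_comm]

lemma hF (R : A →ₗ[ℚ] A) (a : A) : FF R a = 1 + Rb R (X * C a * FF R a) := by
  ext n
  cases n with
  | zero =>
    rw [map_add, coeff_Rb]
    have : coeff 0 (X * C a * FF R a) = 0 := by
      rw [coeff_zero_eq_constantCoeff]; simp [map_mul]
    rw [this, map_zero, add_zero]
    simp [FF, coeff_zero_eq_constantCoeff]
  | succ m =>
    rw [map_add, coeff_Rb, mul_assoc, coeff_succ_X_mul, coeff_C_mul]
    have h1 : coeff (m+1) (1 : A⟦X⟧) = 0 := by simp [coeff_one]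
    have h2 : coeff (m+1) (FF R a)
        = R ((Nat.rec (motive := fun _ => A) 1 (fun _ p => R (p * a)) m) * a) := coeff_mk _ _
    have h3 : coeff m (FF R a)
        = Nat.rec (motive := fun _ => A) 1 (fun _ p => R (p * a)) m := coeff_mk _ _
    rw [h1, zero_add, h2, h3, mul_comm]

lemma hL' (R : A →ₗ[ℚ] A) (a : A) : (LL R a).derivativeFun = Rb R (gg a) := by
  ext n
  rw [coeff_dF, coeff_Rb]
  have h1 : coeff (n+1) (LL R a) = R (((n+1 : ℕ) : ℚ)⁻¹ • a ^ (n+1)) := coeff_mk _ _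
  have h2 : coeff n (gg a) = a ^ (n+1) := coeff_mk _ _
  rw [h1, h2]
  have hne : ((n : ℚ) + 1) ≠ 0 := by positivity
  have h3 : ((n : A) + 1) = algebraMap ℚ A ((n : ℚ) + 1) := by simp
  push_cast
  rw [mul_comm, h3, ← Algebra.smul_def, ← map_smul, smul_smul, mul_inv_cancel₀ hne, one_smul]

/-- The key Rota–Baxter computation: `R̄(g)·F` satisfies the same fixed-point
equation as `F'`. -/
lemma star {R : A →ₗ[ℚ] A}
    (hRB : ∀ u v : A, R u * R v + R (u * v) = R (R u * v + u * R v)) (a : A) :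
    Rb R (gg a) * FF R a
      = Rb R (C a * FF R a + X * C a * (Rb R (gg a) * FF R a)) := by
  have hFe := hF R a
  have hw : Rb R (X * C a * FF R a) = FF R a - 1 := by linear_combination -hFe
  have h4 : Rb R (gg a) * Rb R (X * C a * FF R a)
      = Rb R (Rb R (gg a) * (X * C a * FF R a))
        + Rb R (gg a * Rb R (X * C a * FF R a))
        - Rb R (gg a * (X * C a * FF R a)) := by
    have h := Rb_RB hRB (gg a) (X * C a * FF R a)
    rw [Rb_add] at h
    linear_combination h
  have h5 : Rb R (gg a * Rb R (X * C a * FF R a))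
      = Rb R (gg a * FF R a) - Rb R (gg a) := by
    rw [hw, mul_sub, mul_one, Rb_sub]
  have h6 : Rb R (Rb R (gg a) * (X * C a * FF R a))
      = Rb R (X * C a * (Rb R (gg a) * FF R a)) :=
    congrArg (Rb R) (by ring)
  have h7 : Rb R (gg a * FF R a) - Rb R (gg a * (X * C a * FF R a))
      = Rb R (C a * FF R a) := by
    have harg : gg a * FF R a - gg a * (X * C a * FF R a) = C a * FF R a := by
      linear_combination FF R a * hg a
    rw [← Rb_sub, harg]
  rw [Rb_add]
  linear_combination Rb R (gg a) * hFe + h4 + h5 + h6 + h7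

lemma vanish (R : A →ₗ[ℚ] A) (a : A) {k n : ℕ} (h : n < k) :
    coeff n ((LL R a) ^ k) = 0 := by
  have hX : (X : A⟦X⟧) ∣ LL R a := by
    rw [X_dvd_iff, ← coeff_zero_eq_constantCoeff]
    simp [LL]
  obtain ⟨q, hq⟩ := pow_dvd_pow_of_dvd hX k
  rw [hq, coeff_X_pow_mul', if_neg (not_le.mpr h)]

lemma coeff_ee (R : A →ₗ[ℚ] A) (a : A) (N n : ℕ) :
    coeff n (ee R a N) = ∑ k ∈ range (N+1), (k.factorial : ℚ)⁻¹ • coeff n ((LL R a) ^ k) := by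
  rw [ee, map_sum]
  simp

lemma coeff_EE (R : A →ₗ[ℚ] A) (a : A) {N n : ℕ} (h : n ≤ N) :
    coeff n (EE R a) = coeff n (ee R a N) := by
  rw [coeff_ee, EE, coeff_mk]
  refine Finset.sum_subset (Finset.range_subset_range.mpr (by omega)) fun k _ hk => ?_
  have : n < k := by simpa using hk
  rw [vanish R a this, smul_zero]

omit [Algebra ℚ A] in
lemma dzero : (0 : A⟦X⟧).derivativeFun = 0 := by
  ext n; rw [coeff_dF]; simp

omit [Algebra ℚ A] in
lemma dX : (X : A⟦X⟧).derivativeFun = 1 := by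
  ext n
  rw [coeff_dF, coeff_X, coeff_one]
  cases n with
  | zero => simp
  | succ m => simp

lemma dsmul (q : ℚ) (f : A⟦X⟧) : (q • f).derivativeFun = q • f.derivativeFun := by
  ext n
  rw [coeff_dF, coeff_smul, coeff_smul, coeff_dF, smul_mul_assoc]

omit [Algebra ℚ A] in
lemma dsum {ι : Type*} (s : Finset ι) (f : ι → A⟦X⟧) :
    (∑ i ∈ s, f i).derivativeFun = ∑ i ∈ s, (f i).derivativeFun := by
  classical
  induction s using Finset.induction_on with
  | empty => simpa using dzero
  | insert _ _ h ih => rw [Finset.sum_insert h, Finset.sum_insert h, derivativeFun_add, ih]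

omit [Algebra ℚ A] in
lemma dpow (f : A⟦X⟧) (k : ℕ) :
    (f ^ (k+1)).derivativeFun = (k+1) • (f ^ k * f.derivativeFun) := by
  induction k with
  | zero => simp
  | succ k ih =>
    rw [pow_succ, derivativeFun_mul, ih]
    simp only [smul_eq_mul, nsmul_eq_mul]
    push_cast
    ring

/-- Derivative commutes with the coefficientwise extension of `R`. -/
lemma dRb (R : A →ₗ[ℚ] A) (f : A⟦X⟧) :
    (Rb R f).derivativeFun = Rb R f.derivativeFun := by
  ext n
  rw [coeff_dF, coeff_Rb, coeff_Rb, coeff_dF]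
  calc R (coeff (n+1) f) * ((n : A) + 1)
      = ((n+1 : ℕ) : A) * R (coeff (n+1) f) := by push_cast; ring
    _ = (n+1) • R (coeff (n+1) f) := (nsmul_eq_mul _ _).symm
    _ = R ((n+1) • coeff (n+1) f) := (map_nsmul R _ _).symm
    _ = R (((n+1 : ℕ) : A) * coeff (n+1) f) := by rw [nsmul_eq_mul]
    _ = R (coeff (n+1) f * ((n : A) + 1)) := congrArg R (by push_cast; ring)

lemma de (R : A →ₗ[ℚ] A) (a : A) (N : ℕ) :
    (ee R a (N+1)).derivativeFun = (LL R a).derivativeFun * ee R a N := by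
  rw [ee, dsum]
  have hterm : ∀ k : ℕ,
      ((k.factorial : ℚ)⁻¹ • (LL R a) ^ k).derivativeFun
        = (k.factorial : ℚ)⁻¹ • ((LL R a) ^ k).derivativeFun := fun k => dsmul _ _
  simp only [hterm]
  rw [Finset.sum_range_succ']
  have h0 : ((0:ℕ).factorial : ℚ)⁻¹ • ((LL R a) ^ 0).derivativeFun = 0 := by
    simp [pow_zero, derivativeFun_one]
  rw [h0, add_zero]
  have hterm2 : ∀ k : ℕ,
      (((k+1).factorial : ℚ)⁻¹ • ((LL R a) ^ (k+1)).derivativeFun)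
        = (k.factorial : ℚ)⁻¹ • ((LL R a) ^ k * (LL R a).derivativeFun) := by
    intro k
    rw [dpow, ← Nat.cast_smul_eq_nsmul ℚ, smul_smul]
    congr 1
    rw [Nat.factorial_succ]
    have h1 : (k.factorial : ℚ) ≠ 0 := Nat.cast_ne_zero.mpr k.factorial_ne_zero
    have h2 : ((k:ℚ) + 1) ≠ 0 := by positivity
    push_cast
    field_simp
  simp only [hterm2]
  rw [ee, Finset.mul_sum]
  refine Finset.sum_congr rfl fun k _ => ?_
  rw [mul_smul_comm, mul_comm]

lemma hE' (R : A →ₗ[ℚ] A) (a : A) :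
    (EE R a).derivativeFun = (LL R a).derivativeFun * EE R a := by
  ext n
  rw [coeff_dF, coeff_EE R a (le_refl (n+1)), ← coeff_dF, de]
  rw [coeff_mul, coeff_mul]
  refine Finset.sum_congr rfl fun p hp => ?_
  have h2 : p.2 ≤ n := by
    have := Finset.HasAntidiagonal.mem_antidiagonal.mp hp; omega
  rw [coeff_EE R a h2]

lemma hE0 (R : A →ₗ[ℚ] A) (a : A) : coeff 0 (EE R a) = 1 := by
  rw [EE, coeff_mk, Finset.sum_range_one]
  simp

lemma main {R : A →ₗ[ℚ] A}
    (hRB : ∀ u v : A, R u * R v + R (u * v) = R (R u * v + u * R v)) (a : A) :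
    EE R a = FF R a := by
  have hw' : (X * C a * FF R a).derivativeFun
      = C a * FF R a + X * C a * (FF R a).derivativeFun := by
    rw [derivativeFun_mul (X * C a) (FF R a), derivativeFun_mul X (C a),
      dF_C, dX]
    simp only [smul_eq_mul]
    ring
  have hZ1 : (FF R a).derivativeFun
      = Rb R (C a * FF R a + X * C a * (FF R a).derivativeFun) := by
    calc (FF R a).derivativeFun
        = (1 + Rb R (X * C a * FF R a)).derivativeFun := by rw [← hF]
      _ = Rb R ((X * C a * FF R a).derivativeFun) := by
          rw [derivativeFun_add, derivativeFun_one, zero_add, dRb]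
      _ = Rb R (C a * FF R a + X * C a * (FF R a).derivativeFun) := by rw [hw']
  have hZ : (FF R a).derivativeFun = Rb R (gg a) * FF R a :=
    fix_unique (C a * FF R a) (C a) _ _ hZ1 (star hRB a)
  have hY : (EE R a).derivativeFun = Rb R (gg a) * EE R a := by
    rw [hE', hL']
  have h0 : coeff 0 (EE R a) = coeff 0 (FF R a) := by
    rw [hE0, FF, coeff_mk]; rfl
  exact ode_unique (Rb R (gg a)) _ _ hY hZ h0

end SpitzerAux

/-- Classical (commutative) Spitzer's identity: in `A[[x]]` for a unital
commutative Rota-Baxter ℚ-algebra `(A, R)` of weight 1,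
`exp(R(log((1-ax)⁻¹))) = ∑ₙ xⁿ (Ra)^[n]`, where `R` is extended
coefficientwise, `log((1-ax)⁻¹) = ∑_{n≥1} aⁿxⁿ/n`, `exp` is the exponential
power series, and `(Ra)^[0] = 1`, `(Ra)^[n+1] = R((Ra)^[n]·a)`. -/
theorem stmt_19 {A : Type*} [CommRing A] [Algebra ℚ A]
    (R : A →ₗ[ℚ] A)
    (hRB : ∀ u v : A, R u * R v + R (u * v) = R (R u * v + u * R v))
    (a : A) :
    (PowerSeries.mk fun n : ℕ =>
        ∑ k ∈ Finset.range (n + 1),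
          (k.factorial : ℚ)⁻¹ •
            PowerSeries.coeff n
              ((PowerSeries.mk fun m : ℕ => R ((m : ℚ)⁻¹ • a ^ m)) ^ k))
      = PowerSeries.mk fun n : ℕ =>
          Nat.rec (motive := fun _ => A) 1 (fun _ p => R (p * a)) n := by
  exact SpitzerAux.main hRB a
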